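/- arXiv:2104.05210 — 3 statements merged into one kernel-verified Lean document; each statement's English description precedes it below -/
import Mathlib

section
/- For every row index n ∈ {1,…,N} and every x ∈ ℝ³, Σ_{m=1}^{M} a_{nm} · Σ_J Δ_J(A) · [∏_{k=1}^{N} (κ_m − κ_{j_k})] · E_J(x) · exp(θ_m(x)) = 0, where the inner sum runs over all N-element index sets J = {j₁ < ⋯ < j_N} ⊆ {1,…,M}. (This is τ(x) times the n-th entry of the row vector φ(x,κ)𝒟, so it expresses the 𝒟-symmetry φ(x,κ)𝒟 = 0 of the Sato eigenfunction.) -/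
/-!
Up to the sign `(-1) ^ N`, the summand for `m` and `J` is
`a_{n m} Δ_J(A) V(κ_m, κ_{j₁}, …, κ_{j_N}) ∏_{j ∈ {m} ∪ J} e^{θ_j(x)}`, with `V` the Vandermonde
determinant. As a function of the tuple `(m, j₁, …, j_N)` it is invariant under permutations of
the last `N` entries (both determinants change sign) and vanishes unless the tuple is injective, so
the sum over sets `J` is `1 / N!` times the sum over all tuples `W : Fin (N + 1) → Fin M`.
Averaging that sum over the cyclic shifts of `W` turns it into Laplace's expansion, along its first
row, of the matrix with rows `a_n, a_1, …, a_N` restricted to the columns `W`, which has two equal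
rows.
-/

open Finset

noncomputable section

/-- `θ_j(x) = κ_j x₁ + κ_j² x₂ + κ_j³ x₃`. -/
def theta {M : ℕ} (κ : Fin M → ℝ) (j : Fin M) (x : Fin 3 → ℝ) : ℝ :=
  κ j * x 0 + κ j ^ 2 * x 1 + κ j ^ 3 * x 2

/-- The increasing enumeration `j₁ < ⋯ < j_N` of an `N`-element index set `s ⊆ {1,…,M}`. -/
def cols {M : ℕ} (N : ℕ) (s : Finset (Fin M)) (h : s.card = N) : Fin N → Fin M :=
  fun i => (s.orderIsoOfFin h i : Fin M)

/-- The Plücker coordinate `Δ_J(A)`: the `N×N` minor of `A` formed by the columns in `J`. -/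
def minor {N M : ℕ} (A : Matrix (Fin N) (Fin M) ℝ) (s : Finset (Fin M))
    (h : s.card = N) : ℝ :=
  (A.submatrix id (cols N s h)).det

/-- `E_J(x) = ∏_{l<m} (κ_{j_m} − κ_{j_l}) · exp(θ_{j₁}(x) + ⋯ + θ_{j_N}(x))`. -/
def EJ {M : ℕ} (N : ℕ) (κ : Fin M → ℝ) (s : Finset (Fin M)) (h : s.card = N)
    (x : Fin 3 → ℝ) : ℝ :=
  (∏ p ∈ Finset.univ.filter (fun p : Fin N × Fin N => p.1 < p.2),
      (κ (cols N s h p.2) - κ (cols N s h p.1))) *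
    Real.exp (∑ j ∈ s, theta κ j x)

open Matrix

section Vandermonde

variable {R : Type*} [CommRing R] {n : ℕ}

lemma det_vandermonde_cons (c : R) (v : Fin n → R) :
    (vandermonde (Fin.cons c v)).det = (∏ i, (v i - c)) * (vandermonde v).det := by
  simp only [det_vandermonde, Fin.prod_univ_succ, Fin.prod_Ioi_zero, Fin.prod_Ioi_succ,
    Fin.cons_zero, Fin.cons_succ]

lemma det_vandermonde_comp_perm (v : Fin n → R) (σ : Equiv.Perm (Fin n)) :
    (vandermonde (v ∘ σ)).det = Equiv.Perm.sign σ * (vandermonde v).det :=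
  det_permute σ (vandermonde v)

lemma det_vandermonde_eq_zero_of_not_injective {v : Fin n → R} (hv : ¬ Function.Injective v) :
    (vandermonde v).det = 0 := by
  obtain ⟨i, j, hij, hne⟩ : ∃ i j, v i = v j ∧ i ≠ j := by
    simpa [Function.Injective] using hv
  exact det_zero_of_row_eq hne (funext fun k => by simp [hij])

end Vandermonde

section IncreasingEnumeration

variable {M N : ℕ}

lemma cols_injective (s : Finset (Fin M)) (h : s.card = N) : Function.Injective (cols N s h) :=
  (s.orderEmbOfFin h).injective

lemma range_cols (s : Finset (Fin M)) (h : s.card = N) : Set.range (cols N s h) = s :=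
  s.range_orderEmbOfFin h

lemma prod_comp_cols {β : Type*} [CommMonoid β] (s : Finset (Fin M)) (h : s.card = N)
    (f : Fin M → β) : ∏ j ∈ s, f j = ∏ k, f (cols N s h k) := by
  rw [← s.prod_coe_sort f]
  exact (Equiv.prod_comp (s.orderIsoOfFin h).toEquiv (fun j : s => f j)).symm

lemma sum_comp_cols_perm {β : Type*} [AddCommMonoid β] (F : (Fin N → Fin M) → β) :
    ∑ p : {s : Finset (Fin M) // s.card = N} × Equiv.Perm (Fin N), F (cols N p.1.1 p.1.2 ∘ p.2)
      = ∑ w ∈ univ.filter Function.Injective, F w := by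
  refine sum_bij (fun p _ => cols N p.1.1 p.1.2 ∘ p.2) ?_ ?_ ?_ (fun _ _ => rfl)
  · intro p _
    simpa using (cols_injective p.1.1 p.1.2).comp p.2.injective
  · rintro ⟨⟨s, hs⟩, σ⟩ - ⟨⟨t, ht⟩, τ⟩ - hst
    have hrange := congrArg Set.range hst
    simp only [Set.range_comp, Equiv.range_eq_univ, Set.image_univ, range_cols,
      Finset.coe_inj] at hrange
    subst hrange
    have hστ : ∀ i, σ i = τ i := fun i => cols_injective s hs (congrFun hst i)
    simp [Equiv.ext hστ]
  · intro w hw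
    have hwinj : Function.Injective w := by simpa using hw
    set s := univ.image w
    have hs : s.card = N := by simp [s, card_image_of_injective _ hwinj]
    have hmem : ∀ i, ∃ k, cols N s hs k = w i := fun i => by
      rw [← Set.mem_range, range_cols]
      simp [s]
    choose σ hσ using hmem
    have hσinj : Function.Injective σ := fun i j hij => hwinj (by rw [← hσ, ← hσ, hij])
    exact ⟨(⟨s, hs⟩, Equiv.ofBijective σ hσinj.bijective_of_finite), mem_univ _, funext hσ⟩

lemma sum_eq_factorial_smul_sum_cols {β : Type*} [AddCommMonoid β] (F : (Fin N → Fin M) → β)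
    (hperm : ∀ w (σ : Equiv.Perm (Fin N)), F (w ∘ σ) = F w)
    (hinj : ∀ w, ¬ Function.Injective w → F w = 0) :
    ∑ w, F w = N.factorial • ∑ s : {s : Finset (Fin M) // s.card = N}, F (cols N s.1 s.2) := by
  calc ∑ w, F w = ∑ w ∈ univ.filter Function.Injective, F w :=
        (sum_filter_of_ne fun w _ hw => not_imp_comm.mp (hinj w) hw).symm
    _ = ∑ p : {s : Finset (Fin M) // s.card = N} × Equiv.Perm (Fin N),
          F (cols N p.1.1 p.1.2 ∘ p.2) := (sum_comp_cols_perm F).symm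
    _ = N.factorial • ∑ s : {s : Finset (Fin M) // s.card = N}, F (cols N s.1 s.2) := by
        rw [Fintype.sum_prod_type, smul_sum]
        refine sum_congr rfl fun s _ => ?_
        rw [sum_congr rfl fun σ _ => hperm (cols N s.1 s.2) σ]
        simp [Fintype.card_perm]

end IncreasingEnumeration

section SatoSummand

variable {R : Type*} [CommRing R] {M N : ℕ} (κ c : Fin M → R) (A : Matrix (Fin N) (Fin M) R)
  (n : Fin N)

/-- `(-1) ^ N` times the summand of the theorem for `m` and `J`, as a function of
`W = (m, j₁, …, j_N)` and with the weights `c j = exp (θ_j x)`. -/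
def satoSummand (W : Fin (N + 1) → Fin M) : R :=
  A n (W 0) * (A.submatrix id (Fin.tail W)).det * (vandermonde (κ ∘ W)).det * ∏ i, c (W i)

lemma satoSummand_cons_comp_perm (m : Fin M) (w : Fin N → Fin M) (σ : Equiv.Perm (Fin N)) :
    satoSummand κ c A n (Fin.cons m (w ∘ σ)) = satoSummand κ c A n (Fin.cons m w) := by
  have hminor : (A.submatrix id (w ∘ σ)).det = Equiv.Perm.sign σ * (A.submatrix id w).det :=
    det_permute' σ (A.submatrix id w)
  have hsign : ((Equiv.Perm.sign σ : ℤ) : R) * (Equiv.Perm.sign σ : ℤ) = 1 := by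
    rw [← Int.cast_mul, Int.units_coe_mul_self, Int.cast_one]
  simp only [satoSummand, Fin.cons_zero, Fin.tail_cons, Fin.comp_cons, det_vandermonde_cons,
    Fin.prod_univ_succ, Fin.cons_succ, hminor, ← Function.comp_assoc,
    det_vandermonde_comp_perm, Function.comp_apply,
    Equiv.prod_comp σ (fun i => κ (w i) - κ m), Equiv.prod_comp σ (fun i => c (w i))]
  linear_combination (A n m * (A.submatrix id w).det * (∏ i, (κ (w i) - κ m)) *
    (vandermonde (κ ∘ w)).det * (c m * ∏ i, c (w i))) * hsign

lemma satoSummand_eq_zero_of_not_injective {W : Fin (N + 1) → Fin M}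
    (hW : ¬ Function.Injective W) : satoSummand κ c A n W = 0 := by
  rw [satoSummand, det_vandermonde_eq_zero_of_not_injective fun h => hW h.of_comp, mul_zero,
    zero_mul]

lemma sum_satoSummand_comp_cycleRange (W : Fin (N + 1) → Fin M) :
    ∑ p : Fin (N + 1), satoSummand κ c A n (W ∘ (Fin.cycleRange p).symm) = 0 := by
  set B : Matrix (Fin (N + 1)) (Fin (N + 1)) R := (of (vecCons (A n) A)).submatrix id W
  have hB : B.det = 0 := det_zero_of_row_eq (Fin.succ_ne_zero n).symm rfl
  have hterm : ∀ p : Fin (N + 1), satoSummand κ c A n (W ∘ (Fin.cycleRange p).symm) =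
      (-1) ^ (p : ℕ) * B 0 p * (B.submatrix Fin.succ p.succAbove).det *
        ((vandermonde (κ ∘ W)).det * ∏ i, c (W i)) := by
    intro p
    have hminor : B.submatrix Fin.succ p.succAbove = A.submatrix id (W ∘ p.succAbove) := rfl
    have hvdm : (vandermonde (κ ∘ W ∘ (Fin.cycleRange p).symm)).det
        = (-1) ^ (p : ℕ) * (vandermonde (κ ∘ W)).det := by
      rw [← Function.comp_assoc, det_vandermonde_comp_perm, Equiv.Perm.sign_symm,
        Fin.sign_cycleRange]
      push_cast
      ring
    have htail : Fin.tail (W ∘ (Fin.cycleRange p).symm) = W ∘ p.succAbove :=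
      funext fun k => congrArg W (Fin.cycleRange_symm_succ p k)
    have hprod : ∏ i, c ((W ∘ (Fin.cycleRange p).symm) i) = ∏ i, c (W i) :=
      Equiv.prod_comp (Fin.cycleRange p).symm (fun i => c (W i))
    rw [satoSummand, hminor, hvdm, htail, hprod, Function.comp_apply, Fin.cycleRange_symm_zero,
      show B 0 p = A n (W p) from rfl]
    ring
  rw [sum_congr rfl fun p _ => hterm p, ← sum_mul, ← det_succ_row_zero, hB, zero_mul]

lemma sum_satoSummand [IsDomain R] [CharZero R] : ∑ W, satoSummand κ c A n W = 0 := by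
  have hshift : ∀ p : Fin (N + 1),
      ∑ W, satoSummand κ c A n (W ∘ (Fin.cycleRange p).symm) = ∑ W, satoSummand κ c A n W :=
    fun p => Equiv.sum_comp ((Fin.cycleRange p).arrowCongr (Equiv.refl (Fin M))) _
  have : (N + 1) • ∑ W, satoSummand κ c A n W = 0 := by
    calc (N + 1) • ∑ W, satoSummand κ c A n W
        = ∑ p : Fin (N + 1), ∑ W, satoSummand κ c A n (W ∘ (Fin.cycleRange p).symm) := by
          simp [hshift]
      _ = 0 := by
          rw [sum_comm]
          exact sum_eq_zero fun W _ => sum_satoSummand_comp_cycleRange κ c A n W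
  exact (smul_eq_zero.mp this).resolve_left N.succ_ne_zero

lemma sum_satoSummand_cons_cols [IsDomain R] [CharZero R] :
    ∑ m, ∑ s : {s : Finset (Fin M) // s.card = N},
      satoSummand κ c A n (Fin.cons m (cols N s.1 s.2)) = 0 := by
  have : N.factorial • ∑ m, ∑ s : {s : Finset (Fin M) // s.card = N},
      satoSummand κ c A n (Fin.cons m (cols N s.1 s.2)) = 0 := by
    calc _ = ∑ m, ∑ w : Fin N → Fin M, satoSummand κ c A n (Fin.cons m w) := by
          rw [smul_sum]
          refine sum_congr rfl fun m _ => (sum_eq_factorial_smul_sum_cols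
            (fun w => satoSummand κ c A n (Fin.cons m w))
            (satoSummand_cons_comp_perm κ c A n m) fun w hw => ?_).symm
          exact satoSummand_eq_zero_of_not_injective κ c A n
            fun h => hw (Fin.cons_injective_iff.mp h).2
      _ = ∑ W, satoSummand κ c A n W := (Fintype.sum_prod_type' _).symm.trans
          (Fintype.sum_equiv (Fin.consEquiv fun _ => Fin M) _ _ fun _ => rfl)
      _ = 0 := sum_satoSummand κ c A n
  exact (smul_eq_zero.mp this).resolve_left N.factorial_ne_zero

end SatoSummand

lemma prod_filter_lt_eq_prod_prod_Ioi {β : Type*} [CommMonoid β] {k : ℕ}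
    (f : Fin k → Fin k → β) :
    ∏ p ∈ univ.filter (fun p : Fin k × Fin k => p.1 < p.2), f p.1 p.2
      = ∏ i, ∏ j ∈ Ioi i, f i j := by
  rw [prod_filter, Fintype.prod_prod_type]
  refine prod_congr rfl fun i _ => ?_
  rw [← prod_filter]
  congr 1
  ext j
  simp

lemma EJ_eq_det_vandermonde_mul_prod_exp {M N : ℕ} (κ : Fin M → ℝ) (s : Finset (Fin M))
    (h : s.card = N) (x : Fin 3 → ℝ) :
    EJ N κ s h x =
      (vandermonde (κ ∘ cols N s h)).det * ∏ k, Real.exp (theta κ (cols N s h k) x) := by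
  rw [EJ, det_vandermonde, Real.exp_sum, prod_comp_cols s h,
    prod_filter_lt_eq_prod_prod_Ioi fun i j => κ (cols N s h j) - κ (cols N s h i)]
  rfl

lemma summand_eq_neg_one_pow_mul_satoSummand {M N : ℕ} (κ : Fin M → ℝ)
    (A : Matrix (Fin N) (Fin M) ℝ) (n : Fin N) (x : Fin 3 → ℝ) (m : Fin M)
    (s : Finset (Fin M)) (h : s.card = N) :
    A n m * (minor A s h * (∏ k, (κ m - κ (cols N s h k))) * EJ N κ s h x *
      Real.exp (theta κ m x))
      = (-1) ^ N *
        satoSummand κ (fun j => Real.exp (theta κ j x)) A n (Fin.cons m (cols N s h)) := by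
  have hswap : ∏ k, (κ m - κ (cols N s h k)) = (-1) ^ N * ∏ k, (κ (cols N s h k) - κ m) := by
    simpa using prod_neg (s := univ) fun k => κ (cols N s h k) - κ m
  rw [satoSummand, EJ_eq_det_vandermonde_mul_prod_exp, minor, hswap]
  simp only [Fin.cons_zero, Fin.tail_cons, Fin.comp_cons, det_vandermonde_cons,
    Fin.prod_univ_succ, Fin.cons_succ, Function.comp_apply]
  ring

theorem sato_D_symmetry_general (N M : ℕ)
    (κ : Fin M → ℝ)
    (A : Matrix (Fin N) (Fin M) ℝ) (n : Fin N) (x : Fin 3 → ℝ) :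
    ∑ m : Fin M, A n m *
      ∑ s : {s : Finset (Fin M) // s.card = N},
        minor A s.1 s.2 * (∏ k : Fin N, (κ m - κ (cols N s.1 s.2 k))) *
          EJ N κ s.1 s.2 x * Real.exp (theta κ m x) = 0 := by
  calc _ = (-1) ^ N * ∑ m, ∑ s : {s : Finset (Fin M) // s.card = N},
        satoSummand κ (fun j => Real.exp (theta κ j x)) A n (Fin.cons m (cols N s.1 s.2)) := by
        simp_rw [mul_sum, summand_eq_neg_one_pow_mul_satoSummand]
    _ = 0 := by rw [sum_satoSummand_cons_cols, mul_zero]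

/-- **`𝒟`-symmetry of the Sato eigenfunction.** For `1 ≤ N < M`,
`κ₁ < ⋯ < κ_M`, a real `N×M` matrix `A`, every row index `n` and every `x ∈ ℝ³`:
`Σ_{m=1}^{M} a_{nm} Σ_J Δ_J(A) [∏_{k=1}^N (κ_m − κ_{j_k})] E_J(x) e^{θ_m(x)} = 0`. -/
theorem sato_D_symmetry (N M : ℕ) (hN : 1 ≤ N) (hNM : N < M)
    (κ : Fin M → ℝ) (hκ : StrictMono κ)
    (A : Matrix (Fin N) (Fin M) ℝ) (n : Fin N) (x : Fin 3 → ℝ) :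
    ∑ m : Fin M, A n m *
      ∑ s : {s : Finset (Fin M) // s.card = N},
        minor A s.1 s.2 * (∏ k : Fin N, (κ m - κ (cols N s.1 s.2 k))) *
          EJ N κ s.1 s.2 x * Real.exp (theta κ m x) = 0 :=
  sato_D_symmetry_general N M κ A n x

end
end

section
/- Let 1 ≤ N < M, let κ₁, …, κ_M be nonzero real numbers, let π be an M×M real permutation matrix and d a real N×(M−N) matrix, and set A = (I_N, d)π, 𝒟 = diag(κ₁^N,…,κ_M^N)·Aᵀ and 𝒟′ = (−dᵀ, I_{M−N})·π·diag(κ₁^{−N},…,κ_M^{−N}). Then the N×N matrix 𝒟ᵀ𝒟 and the (M−N)×(M−N) matrix 𝒟′𝒟′ᵀ are invertible, and the M×M matrices P = 𝒟(𝒟ᵀ𝒟)^{−1}𝒟ᵀ and P′ = 𝒟′ᵀ(𝒟′𝒟′ᵀ)^{−1}𝒟′ satisfy P² = P, (P′)² = P′, PP′ = P′P = 0, and P + P′ = I_M. -/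
/-!
The diagonal scalings in `𝒟` and `𝒟′` cancel and so does the permutation, so
`𝒟′𝒟 = (−dᵀ, I)(I, d)ᵀ = 0`. Likewise `𝒟` has a left inverse and `𝒟′` a right inverse, built
from `(I, 0)` and `(0, I)`, so the Gram matrices `𝒟ᵀ𝒟` and `𝒟′𝒟′ᵀ` are positive definite.
What remains is the algebra of `C(BC)⁻¹B` for `(B, C) = (𝒟ᵀ, 𝒟)` and `(𝒟′, 𝒟′ᵀ)`: such maps
are idempotent, annihilate each other when `B′C = 0`, and sum to `I` because the block matrix
`(𝒟, 𝒟′ᵀ)` is square.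
-/

open Matrix

namespace Matrix

section Projectors

variable {m n k R : Type*} [Fintype m] [Fintype n] [Fintype k]
  [DecidableEq n] [DecidableEq k] [CommRing R]

theorem isIdempotentElem_mul_nonsing_inv_mul {B : Matrix n m R} {C : Matrix m n R}
    (h : IsUnit (B * C)) : IsIdempotentElem (C * (B * C)⁻¹ * B) :=
  calc C * (B * C)⁻¹ * B * (C * (B * C)⁻¹ * B)
      = C * (B * C)⁻¹ * ((B * C) * (B * C)⁻¹) * B := by simp only [Matrix.mul_assoc]
    _ = C * (B * C)⁻¹ * B := by
      rw [mul_nonsing_inv _ ((isUnit_iff_isUnit_det _).mp h), Matrix.mul_one]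

theorem mul_nonsing_inv_mul_mul_mul_nonsing_inv_mul_eq_zero {B : Matrix n m R}
    {C : Matrix m n R} {B' : Matrix k m R} {C' : Matrix m k R} (h : B' * C = 0) :
    C' * (B' * C')⁻¹ * B' * (C * (B * C)⁻¹ * B) = 0 :=
  calc C' * (B' * C')⁻¹ * B' * (C * (B * C)⁻¹ * B)
      = C' * (B' * C')⁻¹ * (B' * C) * ((B * C)⁻¹ * B) := by simp only [Matrix.mul_assoc]
    _ = 0 := by rw [h, Matrix.mul_zero, Matrix.zero_mul]

theorem mul_nonsing_inv_mul_add_mul_nonsing_inv_mul_eq_one [DecidableEq m] (e : m ≃ n ⊕ k)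
    {B : Matrix n m R} {C : Matrix m n R} {B' : Matrix k m R} {C' : Matrix m k R}
    (h : IsUnit (B * C)) (h' : IsUnit (B' * C')) (hBC' : B * C' = 0) (hB'C : B' * C = 0) :
    C * (B * C)⁻¹ * B + C' * (B' * C')⁻¹ * B' = 1 := by
  -- `[C C']` has the left inverse `[(BC)⁻¹B; (B'C')⁻¹B']`, which is then also a right inverse.
  have hleft : fromRows ((B * C)⁻¹ * B) ((B' * C')⁻¹ * B') * fromCols C C' = 1 := by
    rw [fromRows_mul_fromCols, Matrix.mul_assoc, Matrix.mul_assoc, Matrix.mul_assoc,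
      Matrix.mul_assoc, hBC', hB'C, Matrix.mul_zero, Matrix.mul_zero,
      nonsing_inv_mul _ ((isUnit_iff_isUnit_det _).mp h),
      nonsing_inv_mul _ ((isUnit_iff_isUnit_det _).mp h'), fromBlocks_one]
  have hright := (fromCols_mul_fromRows_eq_one_comm e _ _ _ _).mpr hleft
  rwa [fromCols_mul_fromRows, ← Matrix.mul_assoc, ← Matrix.mul_assoc] at hright

end Projectors

section Gram

variable {m n : Type*} [Fintype m] [Fintype n] [DecidableEq n]

theorem isUnit_transpose_mul_self_of_mul_eq_one {D : Matrix m n ℝ} {L : Matrix n m ℝ}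
    (h : L * D = 1) : IsUnit (Dᵀ * D) := by
  have hD : Function.Injective D.mulVec := fun x y hxy => by
    simpa [mulVec_mulVec, h] using congrArg (L *ᵥ ·) hxy
  simpa using (PosDef.conjTranspose_mul_self D hD).isUnit

theorem isUnit_mul_transpose_self_of_mul_eq_one {D : Matrix n m ℝ} {R : Matrix m n ℝ}
    (h : D * R = 1) : IsUnit (D * Dᵀ) := by
  simpa using isUnit_transpose_mul_self_of_mul_eq_one (D := Dᵀ) (L := Rᵀ)
    (by rw [← transpose_mul, h, transpose_one])

end Gram

theorem submatrix_mul_diagonal_mul_diagonal_mul_transpose_submatrix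
    {ι o a b R : Type*} [Fintype ι] [Fintype o] [DecidableEq ι] [CommRing R]
    (e : ι ≃ o) (X : Matrix a o R) (Y : Matrix b o R) {s t : ι → R}
    (hts : ∀ j, t j * s j = 1) :
    X.submatrix id e * diagonal t * (diagonal s * (Y.submatrix id e)ᵀ) = X * Yᵀ := by
  rw [Matrix.mul_assoc, ← Matrix.mul_assoc (diagonal t), diagonal_mul_diagonal,
    funext hts, diagonal_one, Matrix.one_mul, transpose_submatrix, submatrix_mul_equiv,
    submatrix_id_id]

end Matrix

theorem orthogonal_projectors_general (N K : ℕ)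
    (κ : Fin (N + K) → ℝ) (hκ : ∀ j, κ j ≠ 0)
    (π : Equiv.Perm (Fin (N + K))) (d : Matrix (Fin N) (Fin K) ℝ)
    (A : Matrix (Fin N) (Fin (N + K)) ℝ)
    (hA : A = (Matrix.fromCols 1 d).submatrix id (fun j => finSumFinEquiv.symm (π⁻¹ j)))
    (D : Matrix (Fin (N + K)) (Fin N) ℝ)
    (hD : D = Matrix.diagonal (fun j => κ j ^ N) * Aᵀ)
    (D' : Matrix (Fin K) (Fin (N + K)) ℝ)
    (hD' : D' = (Matrix.fromCols (-dᵀ) 1).submatrix id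
        (fun j => finSumFinEquiv.symm (π⁻¹ j)) * Matrix.diagonal (fun j => (κ j)⁻¹ ^ N))
    (P P' : Matrix (Fin (N + K)) (Fin (N + K)) ℝ)
    (hP : P = D * (Dᵀ * D)⁻¹ * Dᵀ)
    (hP' : P' = D'ᵀ * (D' * D'ᵀ)⁻¹ * D') :
    IsUnit (Dᵀ * D) ∧ IsUnit (D' * D'ᵀ) ∧
      P * P = P ∧ P' * P' = P' ∧ P * P' = 0 ∧ P' * P = 0 ∧ P + P' = 1 := by
  set e : Fin (N + K) ≃ Fin N ⊕ Fin K := π⁻¹.trans finSumFinEquiv.symm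
  change A = (fromCols 1 d).submatrix id e at hA
  change D' = (fromCols (-dᵀ) 1).submatrix id e * _ at hD'
  have hscale : ∀ j, (κ j)⁻¹ ^ N * κ j ^ N = 1 := fun j => by
    rw [← mul_pow, inv_mul_cancel₀ (hκ j), one_pow]
  have hD'D : D' * D = 0 := by
    rw [hD', hD, hA, submatrix_mul_diagonal_mul_diagonal_mul_transpose_submatrix e _ _ hscale,
      transpose_fromCols, fromCols_mul_fromRows]
    simp
  have hDD : IsUnit (Dᵀ * D) := isUnit_transpose_mul_self_of_mul_eq_one
    (L := (fromCols (1 : Matrix (Fin N) (Fin N) ℝ) 0).submatrix id e *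
      diagonal (fun j => (κ j)⁻¹ ^ N)) <| by
    rw [hD, hA, submatrix_mul_diagonal_mul_diagonal_mul_transpose_submatrix e _ _ hscale,
      transpose_fromCols, fromCols_mul_fromRows]
    simp
  have hD'D' : IsUnit (D' * D'ᵀ) := isUnit_mul_transpose_self_of_mul_eq_one
    (R := diagonal (fun j => κ j ^ N) *
      ((fromCols (0 : Matrix (Fin K) (Fin N) ℝ) 1).submatrix id e)ᵀ) <| by
    rw [hD', submatrix_mul_diagonal_mul_diagonal_mul_transpose_submatrix e _ _ hscale,
      transpose_fromCols, fromCols_mul_fromRows]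
    simp
  have hDD' : Dᵀ * D'ᵀ = 0 := by rw [← transpose_mul, hD'D, transpose_zero]
  subst hP hP'
  exact ⟨hDD, hD'D', isIdempotentElem_mul_nonsing_inv_mul hDD,
    isIdempotentElem_mul_nonsing_inv_mul hD'D',
    mul_nonsing_inv_mul_mul_mul_nonsing_inv_mul_eq_zero hDD',
    mul_nonsing_inv_mul_mul_mul_nonsing_inv_mul_eq_zero hD'D,
    mul_nonsing_inv_mul_add_mul_nonsing_inv_mul_eq_one e hDD hD'D' hDD' hD'D⟩

/-- **orthogonal projectors.** With `1 ≤ N < M = N + K`, nonzero `κ_j`,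
a permutation `π`, `A = (I_N, d)π`, `𝒟 = diag(κ^N)Aᵀ` and `𝒟′ = (−dᵀ, I_{M−N})π diag(κ^{−N})`,
the matrices `𝒟ᵀ𝒟` and `𝒟′𝒟′ᵀ` are invertible, and the projectors
`P = 𝒟(𝒟ᵀ𝒟)⁻¹𝒟ᵀ` and `P′ = 𝒟′ᵀ(𝒟′𝒟′ᵀ)⁻¹𝒟′` satisfy
`P² = P`, `P′² = P′`, `PP′ = P′P = 0` and `P + P′ = I_M`. -/
theorem orthogonal_projectors (N K : ℕ) (hN : 1 ≤ N) (hK : 1 ≤ K)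
    (κ : Fin (N + K) → ℝ) (hκ : ∀ j, κ j ≠ 0)
    (π : Equiv.Perm (Fin (N + K))) (d : Matrix (Fin N) (Fin K) ℝ)
    (A : Matrix (Fin N) (Fin (N + K)) ℝ)
    (hA : A = (Matrix.fromCols 1 d).submatrix id (fun j => finSumFinEquiv.symm (π⁻¹ j)))
    (D : Matrix (Fin (N + K)) (Fin N) ℝ)
    (hD : D = Matrix.diagonal (fun j => κ j ^ N) * Aᵀ)
    (D' : Matrix (Fin K) (Fin (N + K)) ℝ)
    (hD' : D' = (Matrix.fromCols (-dᵀ) 1).submatrix id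
        (fun j => finSumFinEquiv.symm (π⁻¹ j)) * Matrix.diagonal (fun j => (κ j)⁻¹ ^ N))
    (P P' : Matrix (Fin (N + K)) (Fin (N + K)) ℝ)
    (hP : P = D * (Dᵀ * D)⁻¹ * Dᵀ)
    (hP' : P' = D'ᵀ * (D' * D'ᵀ)⁻¹ * D') :
    IsUnit (Dᵀ * D) ∧ IsUnit (D' * D'ᵀ) ∧
      P * P = P ∧ P' * P' = P' ∧ P * P' = 0 ∧ P' * P = 0 ∧ P + P' = 1 :=
  orthogonal_projectors_general N K κ hκ π d A hA D hD D' hD' P P' hP hP'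
end

section
/- Let C > 0 and let K : ℝ² × ℝ² → ℂ be a measurable kernel satisfying |K(x,x′)| ≤ C(1 + |x₂ − x₂′|^{−1/2}) for almost every pair (x,x′) with x₂ ≠ x₂′. Let v : ℝ² → ℝ be measurable with ∫_{ℝ²} |v| dx ≤ ε and ess sup_{x₂ ∈ ℝ} ∫_{ℝ} |v(x₁,x₂)| dx₁ ≤ ε, where 6Cε < 1. Then for every χ ∈ L^∞(ℝ², ℂ) there exists a unique m ∈ L^∞(ℝ², ℂ) such that m(x) = χ(x) − ∫_{ℝ²} K(x,x′) v(x′) m(x′) dx′ for almost every x ∈ ℝ²; moreover the integral converges absolutely for almost every x. -/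
/-!
For a.e. `x`, the kernel `k(x,x′) = K(x,x′) v(x′)` satisfies `∫ |k(x,x′)| dx′ ≤ 6Cε`. Indeed
`1 + |t|^{-1/2} ≤ 2 + |t|^{-1/2} 1_{0<t≤1} + |t|^{-1/2} 1_{-1≤t<0}`; the constant term contributes
`2 ∫|v| ≤ 2ε`, and each singular term, integrated first in `x₁′` (at most `ε` by the ess-sup
bound) and then in `x₂′` (`∫₀¹ s^{-1/2} ds = 2`), contributes `2ε`. Hence
`m ↦ χ - ∫ k(·,x′) m(x′) dx′` is a contraction of `L^∞` with constant `6Cε < 1`: its fixed point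
is the solution, and any `L^∞` solution is a fixed point, hence unique.
-/

open MeasureTheory

open scoped ENNReal NNReal

section KernelOperator

variable {α 𝕜 : Type*} [MeasurableSpace α] {μ : Measure α} [RCLike 𝕜] {k : α → α → 𝕜}
  {κ : ℝ≥0} {f g : α → 𝕜}

theorem ae_lintegral_enorm_kernel_mul_le (hkκ : ∀ᵐ x ∂μ, ∫⁻ y, ‖k x y‖ₑ ∂μ ≤ κ)
    (hf : MemLp f ⊤ μ) : ∀ᵐ x ∂μ, ∫⁻ y, ‖k x y * f y‖ₑ ∂μ ≤ κ * eLpNorm f ⊤ μ := by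
  filter_upwards [hkκ] with x hx
  calc ∫⁻ y, ‖k x y * f y‖ₑ ∂μ ≤ ∫⁻ y, ‖k x y‖ₑ * eLpNorm f ⊤ μ ∂μ := by
        refine lintegral_mono_ae ?_
        filter_upwards [ae_le_eLpNormEssSup (f := f) (μ := μ)] with y hy
        rw [enorm_mul, eLpNorm_exponent_top]
        gcongr
    _ = (∫⁻ y, ‖k x y‖ₑ ∂μ) * eLpNorm f ⊤ μ := lintegral_mul_const' _ _ hf.eLpNorm_ne_top
    _ ≤ κ * eLpNorm f ⊤ μ := by gcongr

theorem eLpNorm_top_integral_kernel_mul_le (hkκ : ∀ᵐ x ∂μ, ∫⁻ y, ‖k x y‖ₑ ∂μ ≤ κ)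
    (hf : MemLp f ⊤ μ) :
    eLpNorm (fun x => ∫ y, k x y * f y ∂μ) ⊤ μ ≤ κ * eLpNorm f ⊤ μ := by
  rw [eLpNorm_exponent_top]
  refine eLpNormEssSup_le_of_ae_enorm_bound ?_
  filter_upwards [ae_lintegral_enorm_kernel_mul_le hkκ hf] with x hx
  exact (enorm_integral_le_lintegral_enorm _).trans hx

variable (μ k) in
def SolvesIntegralEquation (χ m : α → 𝕜) : Prop :=
  MemLp m ⊤ μ ∧ ∀ᵐ x ∂μ, Integrable (fun y => k x y * m y) μ ∧ m x = χ x - ∫ y, k x y * m y ∂μ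

theorem SolvesIntegralEquation.isFixedPt {χ m : α → 𝕜} (hm : SolvesIntegralEquation μ k χ m)
    {T : Lp 𝕜 ⊤ μ → Lp 𝕜 ⊤ μ} (hT : ∀ m, T m =ᵐ[μ] fun x => χ x - ∫ y, k x y * m y ∂μ) :
    Function.IsFixedPt T (hm.1.toLp m) := by
  have hsame : ∀ x, ∫ y, k x y * hm.1.toLp m y ∂μ = ∫ y, k x y * m y ∂μ := fun x =>
    integral_congr_ae (hm.1.coeFn_toLp.mono fun y hy => congrArg (k x y * ·) hy)
  refine Lp.ext ((hT _).trans ?_)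
  filter_upwards [hm.2, hm.1.coeFn_toLp] with x hx hx'
  rw [hsame, hx', hx.2]

theorem aestronglyMeasurable_kernel_mul
    (hk : AEStronglyMeasurable (Function.uncurry k) (μ.prod μ))
    (hf : AEStronglyMeasurable f μ) :
    AEStronglyMeasurable (fun p : α × α => k p.1 p.2 * f p.2) (μ.prod μ) :=
  hk.mul (hf.comp_quasiMeasurePreserving Measure.quasiMeasurePreserving_snd)

variable [SFinite μ]

theorem ae_integrable_kernel_mul (hk : AEStronglyMeasurable (Function.uncurry k) (μ.prod μ))
    (hkκ : ∀ᵐ x ∂μ, ∫⁻ y, ‖k x y‖ₑ ∂μ ≤ κ) (hf : MemLp f ⊤ μ) :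
    ∀ᵐ x ∂μ, Integrable (fun y => k x y * f y) μ := by
  filter_upwards [(aestronglyMeasurable_kernel_mul hk hf.1).prodMk_left,
    ae_lintegral_enorm_kernel_mul_le hkκ hf] with x hmeas hfin
  exact ⟨hmeas, hfin.trans_lt (ENNReal.mul_lt_top ENNReal.coe_lt_top hf.eLpNorm_lt_top)⟩

theorem ae_integral_kernel_mul_sub (hk : AEStronglyMeasurable (Function.uncurry k) (μ.prod μ))
    (hkκ : ∀ᵐ x ∂μ, ∫⁻ y, ‖k x y‖ₑ ∂μ ≤ κ) (hf : MemLp f ⊤ μ) (hg : MemLp g ⊤ μ) :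
    ∀ᵐ x ∂μ, ∫ y, k x y * f y ∂μ - ∫ y, k x y * g y ∂μ = ∫ y, k x y * (f - g) y ∂μ := by
  filter_upwards [ae_integrable_kernel_mul hk hkκ hf, ae_integrable_kernel_mul hk hkκ hg]
    with x hfx hgx
  simp only [← integral_sub hfx hgx, Pi.sub_apply, mul_sub]

theorem memLp_top_integral_kernel_mul (hk : AEStronglyMeasurable (Function.uncurry k) (μ.prod μ))
    (hkκ : ∀ᵐ x ∂μ, ∫⁻ y, ‖k x y‖ₑ ∂μ ≤ κ) (hf : MemLp f ⊤ μ) :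
    MemLp (fun x => ∫ y, k x y * f y ∂μ) ⊤ μ :=
  ⟨(aestronglyMeasurable_kernel_mul hk hf.1).integral_prod_right',
    (eLpNorm_top_integral_kernel_mul_le hkκ hf).trans_lt
      (ENNReal.mul_lt_top ENNReal.coe_lt_top hf.eLpNorm_lt_top)⟩

theorem exists_lipschitzWith_picardMap
    (hk : AEStronglyMeasurable (Function.uncurry k) (μ.prod μ))
    (hkκ : ∀ᵐ x ∂μ, ∫⁻ y, ‖k x y‖ₑ ∂μ ≤ κ) {χ : α → 𝕜} (hχ : MemLp χ ⊤ μ) :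
    ∃ T : Lp 𝕜 ⊤ μ → Lp 𝕜 ⊤ μ, LipschitzWith κ T ∧
      ∀ m, T m =ᵐ[μ] fun x => χ x - ∫ y, k x y * m y ∂μ := by
  let T : Lp 𝕜 ⊤ μ → Lp 𝕜 ⊤ μ := fun m =>
    (hχ.sub (memLp_top_integral_kernel_mul hk hkκ (Lp.memLp m))).toLp _
  have hT : ∀ m, T m =ᵐ[μ] fun x => χ x - ∫ y, k x y * m y ∂μ := fun m => MemLp.coeFn_toLp _
  refine ⟨T, fun m₁ m₂ => ?_, hT⟩
  have hdiff : ⇑(T m₁) - ⇑(T m₂) =ᵐ[μ] fun x => ∫ y, k x y * (⇑m₂ - ⇑m₁) y ∂μ := by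
    filter_upwards [hT m₁, hT m₂,
      ae_integral_kernel_mul_sub hk hkκ (Lp.memLp m₂) (Lp.memLp m₁)] with x h₁ h₂ h
    rw [Pi.sub_apply, h₁, h₂, ← h]
    ring
  rw [Lp.edist_def, Lp.edist_def, eLpNorm_congr_ae hdiff, eLpNorm_sub_comm]
  exact eLpNorm_top_integral_kernel_mul_le hkκ ((Lp.memLp m₂).sub (Lp.memLp m₁))

theorem exists_solvesIntegralEquation_and_unique
    (hk : AEStronglyMeasurable (Function.uncurry k) (μ.prod μ))
    (hkκ : ∀ᵐ x ∂μ, ∫⁻ y, ‖k x y‖ₑ ∂μ ≤ κ) (hκ : κ < 1) {χ : α → 𝕜} (hχ : MemLp χ ⊤ μ) :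
    (∃ m, SolvesIntegralEquation μ k χ m) ∧
      ∀ m₁ m₂, SolvesIntegralEquation μ k χ m₁ → SolvesIntegralEquation μ k χ m₂ →
        m₁ =ᵐ[μ] m₂ := by
  obtain ⟨T, hT_lip, hT⟩ := exists_lipschitzWith_picardMap hk hkκ hχ
  have hT_contr : ContractingWith κ T := ⟨hκ, hT_lip⟩
  set m := ContractingWith.fixedPoint T hT_contr
  refine ⟨⟨m, Lp.memLp m, ?_⟩, fun m₁ m₂ hm₁ hm₂ => ?_⟩
  · filter_upwards [ae_integrable_kernel_mul hk hkκ (Lp.memLp m), hT m] with x hint hx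
    rw [← hx, hT_contr.fixedPoint_isFixedPt]
    exact ⟨hint, rfl⟩
  · have h := hT_contr.fixedPoint_unique' (hm₁.isFixedPt hT) (hm₂.isFixedPt hT)
    exact (MemLp.toLp_eq_toLp_iff _ _).1 h

end KernelOperator

section SingularWeight

variable {α : Type*} [MeasurableSpace α] {μ : Measure α} [SFinite μ]

theorem lintegral_prod_mul_snd_le {β : Type*} [MeasurableSpace β]
    {ν : Measure β} [SFinite ν] {h : β → ℝ≥0∞} (hh : Measurable h)
    {F : α × β → ℝ≥0∞} (hF : Measurable F) {A : ℝ≥0∞}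
    (hA : essSup (fun b => ∫⁻ a, F (a, b) ∂μ) ν ≤ A) :
    ∫⁻ p, h p.2 * F p ∂(μ.prod ν) ≤ (∫⁻ b, h b ∂ν) * A := by
  rw [lintegral_prod_symm' (fun p => h p.2 * F p) ((hh.comp measurable_snd).mul hF)]
  calc ∫⁻ b, ∫⁻ a, h b * F (a, b) ∂μ ∂ν = ∫⁻ b, h b * ∫⁻ a, F (a, b) ∂μ ∂ν :=
        lintegral_congr fun b => lintegral_const_mul _ (hF.comp measurable_prodMk_right)
    _ ≤ ∫⁻ b, h b * A ∂ν := by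
        refine lintegral_mono_ae ?_
        filter_upwards [ENNReal.ae_le_essSup (fun b => ∫⁻ a, F (a, b) ∂μ)] with b hb
        gcongr
        exact hb.trans hA
    _ = (∫⁻ b, h b ∂ν) * A := lintegral_mul_const _ hh

noncomputable def rpowNegHalfIoc : ℝ → ℝ≥0∞ :=
  (Set.Ioc 0 1).indicator fun s => ENNReal.ofReal (s ^ (-(1 / 2 : ℝ)))

theorem measurable_rpowNegHalfIoc : Measurable rpowNegHalfIoc :=
  (by fun_prop : Measurable fun s : ℝ => ENNReal.ofReal (s ^ (-(1 / 2 : ℝ)))).indicator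
    measurableSet_Ioc

theorem lintegral_rpowNegHalfIoc : ∫⁻ s, rpowNegHalfIoc s = 2 := by
  have hint : IntegrableOn (fun s : ℝ => s ^ (-(1 / 2 : ℝ))) (Set.Ioc 0 1) := by
    rw [← intervalIntegrable_iff_integrableOn_Ioc_of_le zero_le_one]
    exact intervalIntegral.intervalIntegrable_rpow' (by norm_num)
  rw [rpowNegHalfIoc, lintegral_indicator measurableSet_Ioc,
    ← ofReal_integral_eq_lintegral_ofReal hint
      ((ae_restrict_mem measurableSet_Ioc).mono fun s hs => Real.rpow_nonneg hs.1.le _),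
    ← intervalIntegral.integral_of_le zero_le_one, integral_rpow (Or.inl (by norm_num))]
  norm_num

theorem ofReal_abs_rpow_neg_half_le (t : ℝ) :
    ENNReal.ofReal (|t| ^ (-(1 / 2 : ℝ))) ≤ 1 + rpowNegHalfIoc t + rpowNegHalfIoc (-t) := by
  rcases le_or_gt |t| 1 with ht | ht
  · rcases lt_trichotomy t 0 with hneg | rfl | hpos
    · rw [rpowNegHalfIoc, Set.indicator_of_mem (s := Set.Ioc 0 1) (a := -t)
        ⟨neg_pos.2 hneg, by rwa [abs_of_neg hneg] at ht⟩, abs_of_neg hneg]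
      exact le_add_self
    · norm_num
    · rw [rpowNegHalfIoc, Set.indicator_of_mem (s := Set.Ioc 0 1) (a := t)
        ⟨hpos, by rwa [abs_of_pos hpos] at ht⟩, abs_of_pos hpos]
      exact le_self_add.trans' le_add_self
  · calc ENNReal.ofReal (|t| ^ (-(1 / 2 : ℝ))) ≤ 1 := by
          rw [← ENNReal.ofReal_one]
          exact ENNReal.ofReal_le_ofReal (Real.rpow_le_one_of_one_le_of_nonpos ht.le (by norm_num))
      _ ≤ 1 + rpowNegHalfIoc t + rpowNegHalfIoc (-t) := by rw [add_assoc]; exact le_self_add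

theorem ofReal_one_add_abs_rpow_neg_half_le (t : ℝ) :
    ENNReal.ofReal (1 + |t| ^ (-(1 / 2 : ℝ))) ≤ 2 + rpowNegHalfIoc t + rpowNegHalfIoc (-t) :=
  calc ENNReal.ofReal (1 + |t| ^ (-(1 / 2 : ℝ)))
      = 1 + ENNReal.ofReal (|t| ^ (-(1 / 2 : ℝ))) := by
        rw [ENNReal.ofReal_add zero_le_one (by positivity), ENNReal.ofReal_one]
    _ ≤ 1 + (1 + rpowNegHalfIoc t + rpowNegHalfIoc (-t)) := by
        gcongr
        exact ofReal_abs_rpow_neg_half_le t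
    _ = 2 + rpowNegHalfIoc t + rpowNegHalfIoc (-t) := by ring

theorem lintegral_one_add_abs_rpow_neg_half_mul_le {F : α × ℝ → ℝ≥0∞} (hF : Measurable F) {A : ℝ≥0∞}
    (hA₁ : ∫⁻ p, F p ∂(μ.prod volume) ≤ A)
    (hA₂ : essSup (fun b => ∫⁻ a, F (a, b) ∂μ) volume ≤ A) (c : ℝ) :
    ∫⁻ p, ENNReal.ofReal (1 + |c - p.2| ^ (-(1 / 2 : ℝ))) * F p ∂(μ.prod volume) ≤ 6 * A := by
  have hsub_left : Measurable fun s : ℝ => rpowNegHalfIoc (c - s) :=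
    measurable_rpowNegHalfIoc.comp (measurable_const.sub measurable_id)
  have hsub_right : Measurable fun s : ℝ => rpowNegHalfIoc (s - c) :=
    measurable_rpowNegHalfIoc.comp (measurable_id.sub measurable_const)
  calc ∫⁻ p, ENNReal.ofReal (1 + |c - p.2| ^ (-(1 / 2 : ℝ))) * F p ∂(μ.prod volume)
      ≤ ∫⁻ p, 2 * F p + rpowNegHalfIoc (c - p.2) * F p + rpowNegHalfIoc (p.2 - c) * F p
          ∂(μ.prod volume) := by
        refine lintegral_mono fun p => ?_
        rw [← add_mul, ← add_mul, ← neg_sub c]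
        gcongr
        exact ofReal_one_add_abs_rpow_neg_half_le _
    _ = 2 * ∫⁻ p, F p ∂(μ.prod volume)
          + ∫⁻ p, rpowNegHalfIoc (c - p.2) * F p ∂(μ.prod volume)
          + ∫⁻ p, rpowNegHalfIoc (p.2 - c) * F p ∂(μ.prod volume) := by
        have hm_left : Measurable fun p : α × ℝ => rpowNegHalfIoc (c - p.2) * F p :=
          (hsub_left.comp measurable_snd).mul hF
        have hm_right : Measurable fun p : α × ℝ => rpowNegHalfIoc (p.2 - c) * F p :=
          (hsub_right.comp measurable_snd).mul hF
        rw [lintegral_add_right _ hm_right, lintegral_add_right _ hm_left,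
          lintegral_const_mul _ hF]
    _ ≤ 2 * A + (∫⁻ s, rpowNegHalfIoc (c - s)) * A + (∫⁻ s, rpowNegHalfIoc (s - c)) * A := by
        gcongr
        · exact lintegral_prod_mul_snd_le hsub_left hF hA₂
        · exact lintegral_prod_mul_snd_le hsub_right hF hA₂
    _ = 6 * A := by
        rw [lintegral_sub_left_eq_self, lintegral_sub_right_eq_self, lintegral_rpowNegHalfIoc]
        ring

theorem ae_ae_of_ae_prod_of_snd_ne {P : α × ℝ → α × ℝ → Prop}
    (h : ∀ᵐ p ∂((μ.prod volume).prod (μ.prod volume)), p.1.2 ≠ p.2.2 → P p.1 p.2) :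
    ∀ᵐ x ∂(μ.prod volume), ∀ᵐ y ∂(μ.prod volume), P x y := by
  filter_upwards [Measure.ae_ae_of_ae_prod h] with x hx
  filter_upwards [hx, Measure.quasiMeasurePreserving_snd.ae
    ((Set.countable_singleton x.2).ae_notMem volume)] with y hy hne
  exact hy (Ne.symm hne)

theorem ae_lintegral_enorm_mul_le_of_norm_le_rpow_neg_half {C : ℝ} {K : α × ℝ → α × ℝ → ℂ}
    (hK : ∀ᵐ p ∂((μ.prod volume).prod (μ.prod volume)), p.1.2 ≠ p.2.2 →
      ‖K p.1 p.2‖ ≤ C * (1 + |p.1.2 - p.2.2| ^ (-(1 / 2 : ℝ))))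
    {v : α × ℝ → ℝ} (hv : Measurable v) {A : ℝ≥0∞}
    (hA₁ : ∫⁻ p, ‖v p‖ₑ ∂(μ.prod volume) ≤ A)
    (hA₂ : essSup (fun b => ∫⁻ a, ‖v (a, b)‖ₑ ∂μ) volume ≤ A) :
    ∀ᵐ x ∂(μ.prod volume),
      ∫⁻ y, ‖K x y * v y‖ₑ ∂(μ.prod volume) ≤ ENNReal.ofReal C * (6 * A) := by
  filter_upwards [ae_ae_of_ae_prod_of_snd_ne
    (P := fun x y => ‖K x y‖ ≤ C * (1 + |x.2 - y.2| ^ (-(1 / 2 : ℝ)))) hK] with x hx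
  calc ∫⁻ y, ‖K x y * v y‖ₑ ∂(μ.prod volume)
      ≤ ∫⁻ y, ENNReal.ofReal C * (ENNReal.ofReal (1 + |x.2 - y.2| ^ (-(1 / 2 : ℝ))) * ‖v y‖ₑ)
          ∂(μ.prod volume) := by
        refine lintegral_mono_ae (hx.mono fun y hy => ?_)
        rw [← ofReal_norm, ← ofReal_norm, ← ENNReal.ofReal_mul' (norm_nonneg _),
          ← ENNReal.ofReal_mul' (by positivity), norm_mul, Complex.norm_real, ← mul_assoc]
        gcongr
    _ = ENNReal.ofReal C * ∫⁻ y, ENNReal.ofReal (1 + |x.2 - y.2| ^ (-(1 / 2 : ℝ))) * ‖v y‖ₑ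
          ∂(μ.prod volume) := lintegral_const_mul' _ _ ENNReal.ofReal_ne_top
    _ ≤ ENNReal.ofReal C * (6 * A) := by
        gcongr
        exact lintegral_one_add_abs_rpow_neg_half_mul_le hv.enorm hA₁ hA₂ x.2

end SingularWeight

theorem picard_solvability_general (C ε : ℝ) (hε : 6 * C * ε < 1)
    (K : (ℝ × ℝ) → (ℝ × ℝ) → ℂ) (hK : Measurable (Function.uncurry K))
    (hKbd : ∀ᵐ p : (ℝ × ℝ) × (ℝ × ℝ) ∂volume, p.1.2 ≠ p.2.2 →
      ‖K p.1 p.2‖ ≤ C * (1 + |p.1.2 - p.2.2| ^ (-(1 / 2 : ℝ))))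
    (v : ℝ × ℝ → ℝ) (hv : Measurable v)
    (hv1 : ∫⁻ x, ‖v x‖₊ ∂volume ≤ ENNReal.ofReal ε)
    (hv2 : essSup (fun x₂ : ℝ => ∫⁻ x₁ : ℝ, ‖v (x₁, x₂)‖₊ ∂volume) volume ≤
      ENNReal.ofReal ε)
    (χ : ℝ × ℝ → ℂ) (hχ : MemLp χ ⊤ volume) :
    (∃ m : ℝ × ℝ → ℂ, MemLp m ⊤ volume ∧
      ∀ᵐ x ∂(volume : Measure (ℝ × ℝ)),
        Integrable (fun x' => K x x' * (v x' : ℂ) * m x') volume ∧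
        m x = χ x - ∫ x', K x x' * (v x' : ℂ) * m x' ∂volume) ∧
    ∀ m₁ m₂ : ℝ × ℝ → ℂ,
      (MemLp m₁ ⊤ volume ∧ ∀ᵐ x ∂(volume : Measure (ℝ × ℝ)),
        Integrable (fun x' => K x x' * (v x' : ℂ) * m₁ x') volume ∧
        m₁ x = χ x - ∫ x', K x x' * (v x' : ℂ) * m₁ x' ∂volume) →
      (MemLp m₂ ⊤ volume ∧ ∀ᵐ x ∂(volume : Measure (ℝ × ℝ)),
        Integrable (fun x' => K x x' * (v x' : ℂ) * m₂ x') volume ∧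
        m₂ x = χ x - ∫ x', K x x' * (v x' : ℂ) * m₂ x' ∂volume) →
      m₁ =ᵐ[volume] m₂ := by
  have hkκ : ∀ᵐ x ∂(volume : Measure (ℝ × ℝ)),
      ∫⁻ x', ‖K x x' * (v x' : ℂ)‖ₑ ≤ ((6 * C * ε).toNNReal : ℝ≥0∞) := by
    filter_upwards [ae_lintegral_enorm_mul_le_of_norm_le_rpow_neg_half hKbd hv hv1 hv2] with x hx
    refine hx.trans ?_
    change _ ≤ ENNReal.ofReal (6 * C * ε)
    rcases le_total 0 C with hC | hC
    · rw [ENNReal.ofReal_mul (by positivity), ENNReal.ofReal_mul (by norm_num),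
        ENNReal.ofReal_ofNat, mul_left_comm, mul_assoc]
    · simp [ENNReal.ofReal_of_nonpos hC]
  exact exists_solvesIntegralEquation_and_unique
    (hK.mul ((Complex.measurable_ofReal.comp hv).comp measurable_snd)).aestronglyMeasurable
    hkκ (Real.toNNReal_lt_one.2 (by linarith)) hχ

/-- **Picard solvability of the eigenfunction integral equation.**
Let `C > 0` and let `K : ℝ² × ℝ² → ℂ` be a measurable kernel with
`|K(x,x′)| ≤ C(1 + |x₂ − x₂′|^{−1/2})` for a.e. `(x,x′)` with `x₂ ≠ x₂′`.
Let `v : ℝ² → ℝ` be measurable with `∫|v| ≤ ε` and `ess sup_{x₂} ∫|v(x₁,x₂)|dx₁ ≤ ε`,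
where `6Cε < 1`. Then for every `χ ∈ L^∞(ℝ²,ℂ)` there is an `m ∈ L^∞(ℝ²,ℂ)`,
unique up to a.e. equality, with `m(x) = χ(x) − ∫ K(x,x′)v(x′)m(x′)dx′` for a.e. `x`,
the integral converging absolutely for a.e. `x`. -/
theorem picard_solvability (C ε : ℝ) (hC : 0 < C) (hε : 6 * C * ε < 1)
    (K : (ℝ × ℝ) → (ℝ × ℝ) → ℂ) (hK : Measurable (Function.uncurry K))
    (hKbd : ∀ᵐ p : (ℝ × ℝ) × (ℝ × ℝ) ∂volume, p.1.2 ≠ p.2.2 →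
      ‖K p.1 p.2‖ ≤ C * (1 + |p.1.2 - p.2.2| ^ (-(1 / 2 : ℝ))))
    (v : ℝ × ℝ → ℝ) (hv : Measurable v)
    (hv1 : ∫⁻ x, ‖v x‖₊ ∂volume ≤ ENNReal.ofReal ε)
    (hv2 : essSup (fun x₂ : ℝ => ∫⁻ x₁ : ℝ, ‖v (x₁, x₂)‖₊ ∂volume) volume ≤
      ENNReal.ofReal ε)
    (χ : ℝ × ℝ → ℂ) (hχ : MemLp χ ⊤ volume) :
    (∃ m : ℝ × ℝ → ℂ, MemLp m ⊤ volume ∧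
      ∀ᵐ x ∂(volume : Measure (ℝ × ℝ)),
        Integrable (fun x' => K x x' * (v x' : ℂ) * m x') volume ∧
        m x = χ x - ∫ x', K x x' * (v x' : ℂ) * m x' ∂volume) ∧
    ∀ m₁ m₂ : ℝ × ℝ → ℂ,
      (MemLp m₁ ⊤ volume ∧ ∀ᵐ x ∂(volume : Measure (ℝ × ℝ)),
        Integrable (fun x' => K x x' * (v x' : ℂ) * m₁ x') volume ∧
        m₁ x = χ x - ∫ x', K x x' * (v x' : ℂ) * m₁ x' ∂volume) →
      (MemLp m₂ ⊤ volume ∧ ∀ᵐ x ∂(volume : Measure (ℝ × ℝ)),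
        Integrable (fun x' => K x x' * (v x' : ℂ) * m₂ x') volume ∧
        m₂ x = χ x - ∫ x', K x x' * (v x' : ℂ) * m₂ x' ∂volume) →
      m₁ =ᵐ[volume] m₂ :=
  picard_solvability_general C ε hε K hK hKbd v hv hv1 hv2 χ hχ
end
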